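/- arXiv:1408.3774 — 3 statements merged into one kernel-verified Lean document; each statement's English description precedes it below -/
import Mathlib

section
/- For fixed S > 0, z ≥ 0 and y ∈ ℝ, the set Γ(S,z,y) = {β ∈ ℝ : h(S,z,y,β) ≥ 0}, where h(S,z,y,β) = z + g(y,S) − g(y+β,S) − g(β,S) for β ≠ 0 and h(S,z,y,0) = z − δ, is a compact subset of ℝ. -/
/-- Transaction cost function `g(β,S) = max(δ, μ|β|S)·1_{β≠0}`. -/
noncomputable def tcost (δ μ : ℝ) (β S : ℝ) : ℝ :=
  if β = 0 then 0 else max δ (μ * |β| * S)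

/-- Post-trade portfolio value `h(S,z,y,β)`, defined at `β = 0` by continuity as `z - δ`. -/
noncomputable def postTrade (δ μ : ℝ) (S z y β : ℝ) : ℝ :=
  if β = 0 then z - δ
  else z + tcost δ μ y S - tcost δ μ (y + β) S - tcost δ μ β S

/-!
Off the two points `β = 0` and `β = -y` the indicator in `g` is inactive, so `h(S,z,y,·)` agrees
with the continuous function `z + g(y,S) - max(δ, μ|y+β|S) - max(δ, μ|β|S)`, which also bounds it
from below everywhere. Hence `Γ` is the union of a closed superlevel set of that function and a
finite set, so it is closed. It is bounded because a nonzero `β ∈ Γ` pays at least `μ|β|S` in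
costs out of the budget `z + g(y,S)`.
-/

theorem isClosed_setOf_le_of_continuous_minorant {X : Type*} [TopologicalSpace X] [T1Space X]
    {f F : X → ℝ} {E : Set X} (hF : Continuous F) (hFf : F ≤ f) (hE : E.Finite)
    (hfF : Set.EqOn f F Eᶜ) (c : ℝ) : IsClosed {x | c ≤ f x} := by
  have hsplit : {x | c ≤ f x} = {x | c ≤ F x} ∪ ({x | c ≤ f x} ∩ E) := by
    ext x
    by_cases hx : x ∈ E
    · simp only [Set.mem_union, Set.mem_ofPred_eq, Set.mem_inter_iff, hx, and_true]
      exact ⟨Or.inr, fun h => h.elim (fun h => h.trans (hFf x)) id⟩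
    · simp [hx, hfF hx]
  rw [hsplit]
  exact (isClosed_le continuous_const hF).union (hE.inter_of_right _).isClosed

section TransactionCost

variable {δ μ S : ℝ}

theorem tcost_of_ne_zero {t : ℝ} (ht : t ≠ 0) : tcost δ μ t S = max δ (μ * |t| * S) :=
  if_neg ht

theorem tcost_le_max (t : ℝ) : tcost δ μ t S ≤ max δ (μ * |t| * S) := by
  by_cases ht : t = 0
  · simp [tcost, ht]
  · exact (tcost_of_ne_zero ht).le

theorem mul_abs_mul_le_tcost (t : ℝ) : μ * |t| * S ≤ tcost δ μ t S := by
  by_cases ht : t = 0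
  · simp [tcost, ht]
  · exact (tcost_of_ne_zero ht).ge.trans' (le_max_right _ _)

theorem tcost_nonneg (hμ : 0 ≤ μ) (hS : 0 ≤ S) (t : ℝ) : 0 ≤ tcost δ μ t S :=
  (by positivity : 0 ≤ μ * |t| * S).trans (mul_abs_mul_le_tcost t)

end TransactionCost

section PostTrade

variable {δ μ S z y : ℝ}

noncomputable def postTradeLower (δ μ S z y β : ℝ) : ℝ :=
  z + tcost δ μ y S - max δ (μ * |y + β| * S) - max δ (μ * |β| * S)

theorem continuous_postTradeLower : Continuous (postTradeLower δ μ S z y) := by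
  unfold postTradeLower
  fun_prop

theorem postTradeLower_le_postTrade (β : ℝ) :
    postTradeLower δ μ S z y β ≤ postTrade δ μ S z y β := by
  unfold postTradeLower postTrade
  have hy := tcost_le_max (δ := δ) (μ := μ) (S := S) (y + β)
  split_ifs with hβ
  · subst hβ
    have := tcost_le_max (δ := δ) (μ := μ) (S := S) y
    simp only [add_zero] at hy ⊢
    linarith [le_max_left δ (μ * |(0 : ℝ)| * S)]
  · rw [tcost_of_ne_zero hβ]
    linarith

theorem postTrade_eqOn_postTradeLower :
    Set.EqOn (postTrade δ μ S z y) (postTradeLower δ μ S z y) {0, -y}ᶜ := by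
  intro β hβ
  simp only [Set.mem_compl_iff, Set.mem_insert_iff, Set.mem_singleton_iff, not_or] at hβ
  have hyβ : y + β ≠ 0 := fun h => hβ.2 (by linarith)
  rw [postTrade, if_neg hβ.1, tcost_of_ne_zero hyβ, tcost_of_ne_zero hβ.1, postTradeLower]

theorem mul_abs_mul_le_of_nonneg_postTrade (hμ : 0 ≤ μ) (hS : 0 ≤ S) {β : ℝ} (hβ : β ≠ 0)
    (h : 0 ≤ postTrade δ μ S z y β) : μ * |β| * S ≤ z + tcost δ μ y S := by
  rw [postTrade, if_neg hβ] at h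
  linarith [mul_abs_mul_le_tcost (δ := δ) (μ := μ) (S := S) β,
    tcost_nonneg (δ := δ) hμ hS (y + β)]

theorem isClosed_setOf_nonneg_postTrade : IsClosed {β : ℝ | 0 ≤ postTrade δ μ S z y β} :=
  isClosed_setOf_le_of_continuous_minorant continuous_postTradeLower postTradeLower_le_postTrade
    (Set.toFinite _) postTrade_eqOn_postTradeLower 0

theorem isBounded_setOf_nonneg_postTrade (hμ : 0 < μ) (hS : 0 < S) :
    Bornology.IsBounded {β : ℝ | 0 ≤ postTrade δ μ S z y β} := by
  refine ((Metric.isBounded_closedBall (x := 0)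
    (r := (z + tcost δ μ y S) / (μ * S))).insert 0).subset fun β hβ => ?_
  by_cases hβ0 : β = 0
  · exact Or.inl hβ0
  · have h := mul_abs_mul_le_of_nonneg_postTrade hμ.le hS.le hβ0 hβ
    refine Or.inr (mem_closedBall_zero_iff.mpr ?_)
    rw [Real.norm_eq_abs, le_div_iff₀ (mul_pos hμ hS)]
    linarith

end PostTrade

theorem permissible_trades_compact_general (δ μ S z y : ℝ) (hμ : 0 < μ) (hS : 0 < S) :
    IsCompact {β : ℝ | 0 ≤ postTrade δ μ S z y β} :=
  Metric.isCompact_of_isClosed_isBounded isClosed_setOf_nonneg_postTrade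
    (isBounded_setOf_nonneg_postTrade hμ hS)

theorem permissible_trades_compact (δ μ S z y : ℝ) (hδ : 0 < δ) (hμ : 0 < μ)
    (hμ1 : μ < 1) (hS : 0 < S) (hz : 0 ≤ z) :
    IsCompact {β : ℝ | 0 ≤ postTrade δ μ S z y β} :=
  permissible_trades_compact_general δ μ S z y hμ hS
end

section
/- Let S : [0,T] → ℝ₊ be continuous positive, γ : [0,T] → ℝ of bounded variation with Jordan decomposition γ = γ⁺ − γ⁻ (γ⁺, γ⁻ nondecreasing, γ⁺(0)=γ⁻(0)=0, γ(0)=y), and suppose for constants z ≥ 0, 0 < μ < 1, c₀ := z + g(y,s) + |y|s with s = S(0), that for all t: 0 ≤ c₀ − (1+μ)∫_{[0,t]} S dγ − 2μ∫_{[0,t]} S dγ⁻ + (1+μ)γ(t)S(t) and 0 ≤ c₀ − (1−μ)∫_{[0,t]} S dγ − 2μ∫_{[0,t]} S dγ⁺ + (1−μ)γ(t)S(t). Then for all t ∈ [0,T]: |γ(t)S(t)|² ≤ (z + g(y,s) + (2+3μ)|y|s)²/(2μ²) + ((1+μ)²/(2μ²))·(∫_0^t γ dS)², where ∫_0^t γ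 dS = γ(t)S(t) − ys − ∫_{[0,t]} S dγ (integration by parts). -/
open MeasureTheory

/-- The Riemann–Stieltjes integral `∫_{[0,t]} S dγ` against a nondecreasing
right-continuous function `γ`, realized as the Lebesgue integral against the
associated Stieltjes measure. -/
noncomputable def stieltjesInt (S : ℝ → ℝ) (γ : StieltjesFunction ℝ) (t : ℝ) : ℝ :=
  ∫ u in Set.Icc (0:ℝ) t, S u ∂γ.measure

/-!
Write `X = γ(t)S(t)` and `I = ∫ S dγ⁺ - ∫ S dγ⁻`. Up to the nonnegative terms `2μ ∫ S dγ^∓`,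
the two admissibility inequalities say `2μX ≤ c₀ + (1+μ)(X - I)` and
`-2μX ≤ c₀ + (1-μ)(X - I)`, so `2μ|X| ≤ c₀ + (1+μ)|X - I|`. Since `X - I = ys + ∫ γ dS`,
this bounds `2μ|X|` linearly by `|∫ γ dS|`, and squaring with `(a + b)² ≤ 2a² + 2b²` gives
the quadratic bound.
-/

lemma stieltjesInt_nonneg {S : ℝ → ℝ} {t : ℝ} (γ : StieltjesFunction ℝ)
    (hS : ∀ u ∈ Set.Icc (0:ℝ) t, 0 ≤ S u) : 0 ≤ stieltjesInt S γ t :=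
  setIntegral_nonneg measurableSet_Icc hS

lemma two_mul_abs_le_of_admissible {c μ x Ip Im : ℝ} (hμ : 0 ≤ μ)
    (hIp : 0 ≤ Ip) (hIm : 0 ≤ Im)
    (h₁ : 0 ≤ c - (1 + μ) * (Ip - Im) - 2 * μ * Im + (1 + μ) * x)
    (h₂ : 0 ≤ c - (1 - μ) * (Ip - Im) - 2 * μ * Ip + (1 - μ) * x) :
    2 * μ * |x| ≤ c + (1 + μ) * |x - (Ip - Im)| := by
  have hw := le_abs_self (x - (Ip - Im))
  have hw' := neg_abs_le (x - (Ip - Im))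
  have hμw : 0 ≤ μ * (x - (Ip - Im) + |x - (Ip - Im)|) := mul_nonneg hμ (by linarith)
  rcases abs_cases x with ⟨hx, -⟩ | ⟨hx, -⟩ <;> rw [hx] <;> nlinarith

lemma sq_le_of_two_mul_abs_le {c b μ x q : ℝ} (hμ : 0 < μ)
    (h : 2 * μ * |x| ≤ c + b * |q|) :
    x ^ 2 ≤ c ^ 2 / (2 * μ ^ 2) + (b ^ 2 / (2 * μ ^ 2)) * q ^ 2 := by
  have hsq : (2 * μ * |x|) ^ 2 ≤ (c + b * |q|) ^ 2 :=
    pow_le_pow_left₀ (by positivity) h 2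
  have hsplit : (c + b * |q|) ^ 2 ≤ 2 * (c ^ 2 + (b * |q|) ^ 2) := add_sq_le
  rw [mul_pow, sq_abs] at hsq hsplit
  rw [div_mul_eq_mul_div, ← add_div, le_div_iff₀ (by positivity)]
  linarith

theorem portfolio_growth_pathwise_general (T s z δ μ y : ℝ)
    (hμ : 0 < μ)
    (S : ℝ → ℝ) (hSpos : ∀ t, 0 < S t) (hs : S 0 = s)
    (γp γm : StieltjesFunction ℝ)
    (γ : ℝ → ℝ)
    (hadm1 : ∀ t ∈ Set.Icc (0:ℝ) T,
      0 ≤ z + tcost δ μ y s + |y| * s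
        - (1 + μ) * (stieltjesInt S γp t - stieltjesInt S γm t)
        - 2 * μ * stieltjesInt S γm t + (1 + μ) * (γ t * S t))
    (hadm2 : ∀ t ∈ Set.Icc (0:ℝ) T,
      0 ≤ z + tcost δ μ y s + |y| * s
        - (1 - μ) * (stieltjesInt S γp t - stieltjesInt S γm t)
        - 2 * μ * stieltjesInt S γp t + (1 - μ) * (γ t * S t)) :
    ∀ t ∈ Set.Icc (0:ℝ) T,
      (γ t * S t) ^ 2 ≤ (z + tcost δ μ y s + (2 + 3 * μ) * |y| * s) ^ 2 / (2 * μ ^ 2)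
        + ((1 + μ) ^ 2 / (2 * μ ^ 2)) *
          (γ t * S t - y * s - (stieltjesInt S γp t - stieltjesInt S γm t)) ^ 2 := by
  intro t ht
  have hs0 : 0 ≤ s := hs ▸ (hSpos 0).le
  have hS : ∀ u ∈ Set.Icc (0:ℝ) t, 0 ≤ S u := fun u _ => (hSpos u).le
  have hlin := two_mul_abs_le_of_admissible hμ.le (stieltjesInt_nonneg γp hS)
    (stieltjesInt_nonneg γm hS) (hadm1 t ht) (hadm2 t ht)
  set I := stieltjesInt S γp t - stieltjesInt S γm t
  have hgain : |γ t * S t - I| ≤ |y| * s + |γ t * S t - y * s - I| := by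
    have h := abs_sub_abs_le_abs_sub (γ t * S t - I) (y * s)
    rw [sub_right_comm, abs_mul, abs_of_nonneg hs0] at h
    linarith
  refine sq_le_of_two_mul_abs_le hμ ?_
  have := mul_le_mul_of_nonneg_left hgain (by linarith : (0:ℝ) ≤ 1 + μ)
  have : 0 ≤ μ * (|y| * s) := by positivity
  linarith

/-- Pathwise growth bound for admissible portfolios under proportional-plus-fixed
transaction costs. -/
theorem portfolio_growth_pathwise (T s z δ μ y : ℝ) (hT : 0 ≤ T) (hδ : 0 < δ)
    (hμ : 0 < μ) (hμ1 : μ < 1) (hz : 0 ≤ z)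
    (S : ℝ → ℝ) (hScont : Continuous S) (hSpos : ∀ t, 0 < S t) (hs : S 0 = s)
    (γp γm : StieltjesFunction ℝ) (hγp0 : γp 0 = 0) (hγm0 : γm 0 = 0)
    (γ : ℝ → ℝ) (hγ : ∀ t, γ t = y + γp t - γm t)
    (hadm1 : ∀ t ∈ Set.Icc (0:ℝ) T,
      0 ≤ z + tcost δ μ y s + |y| * s
        - (1 + μ) * (stieltjesInt S γp t - stieltjesInt S γm t)
        - 2 * μ * stieltjesInt S γm t + (1 + μ) * (γ t * S t))
    (hadm2 : ∀ t ∈ Set.Icc (0:ℝ) T,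
      0 ≤ z + tcost δ μ y s + |y| * s
        - (1 - μ) * (stieltjesInt S γp t - stieltjesInt S γm t)
        - 2 * μ * stieltjesInt S γp t + (1 - μ) * (γ t * S t)) :
    ∀ t ∈ Set.Icc (0:ℝ) T,
      (γ t * S t) ^ 2 ≤ (z + tcost δ μ y s + (2 + 3 * μ) * |y| * s) ^ 2 / (2 * μ ^ 2)
        + ((1 + μ) ^ 2 / (2 * μ ^ 2)) *
          (γ t * S t - y * s - (stieltjesInt S γp t - stieltjesInt S γm t)) ^ 2 :=
  portfolio_growth_pathwise_general T s z δ μ y hμ S hSpos hs γp γm γ hadm1 hadm2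
end

section
/- Under the hypotheses of the pathwise growth bound, one also has the one-sided estimates: ∫_{[0,t]} S dγ⁻ ≤ (1/(2μ))·(z + g(y,s) + |y|s + (1+μ)(|y|s + ∫_0^t γ dS)) and ∫_{[0,t]} S dγ⁺ ≤ (1/(2μ))·(z + g(y,s) + |y|s + (1−μ)(|y|s + ∫_0^t γ dS)) for every t ∈ [0,T]. -/
open MeasureTheory

/-- Applied with `V = ∫ S dγ^∓`, `d = ∫ S dγ`, `c = γ(t)S(t)`, `κ = 1 ± μ`, `a = ys ≤ |y|s = b`:
an admissibility inequality rearranges to the bound, and trading `a` for `b` only enlarges it. -/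
theorem le_one_div_two_mul_of_nonneg_sub {μ κ V W a b c d : ℝ} (hμ : 0 < μ) (hκ : 0 ≤ κ)
    (hab : a ≤ b) (h : 0 ≤ W - κ * d - 2 * μ * V + κ * c) :
    V ≤ 1 / (2 * μ) * (W + κ * (b + (c - a - d))) := by
  rw [one_div_mul_eq_div, le_div_iff₀' (by positivity)]
  have := mul_le_mul_of_nonneg_left hab hκ
  linarith

/-- Here `∫_0^t γ dS` appears through integration by parts as
`γ(t)S(t) − ys − ∫_{[0,t]} S dγ`. -/
theorem portfolio_variation_bounds_general (T s z δ μ y : ℝ)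
    (hμ : 0 < μ) (hμ1 : μ < 1)
    (S : ℝ → ℝ) (hSpos : ∀ t, 0 < S t) (hs : S 0 = s)
    (γp γm : StieltjesFunction ℝ) (γ : ℝ → ℝ)
    (hadm1 : ∀ t ∈ Set.Icc (0:ℝ) T,
      0 ≤ z + tcost δ μ y s + |y| * s
        - (1 + μ) * (stieltjesInt S γp t - stieltjesInt S γm t)
        - 2 * μ * stieltjesInt S γm t + (1 + μ) * (γ t * S t))
    (hadm2 : ∀ t ∈ Set.Icc (0:ℝ) T,
      0 ≤ z + tcost δ μ y s + |y| * s
        - (1 - μ) * (stieltjesInt S γp t - stieltjesInt S γm t)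
        - 2 * μ * stieltjesInt S γp t + (1 - μ) * (γ t * S t)) :
    ∀ t ∈ Set.Icc (0:ℝ) T,
      stieltjesInt S γm t ≤ (1 / (2 * μ)) * (z + tcost δ μ y s + |y| * s
        + (1 + μ) * (|y| * s
          + (γ t * S t - y * s - (stieltjesInt S γp t - stieltjesInt S γm t)))) ∧
      stieltjesInt S γp t ≤ (1 / (2 * μ)) * (z + tcost δ μ y s + |y| * s
        + (1 - μ) * (|y| * s
          + (γ t * S t - y * s - (stieltjesInt S γp t - stieltjesInt S γm t)))) := by
  intro t ht
  have hys : y * s ≤ |y| * s := mul_le_mul_of_nonneg_right (le_abs_self y) (hs ▸ (hSpos 0).le)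
  exact ⟨le_one_div_two_mul_of_nonneg_sub hμ (by linarith) hys (hadm1 t ht),
    le_one_div_two_mul_of_nonneg_sub hμ (by linarith) hys (hadm2 t ht)⟩

/-- One-sided estimates on the Stieltjes integrals against the positive and negative
variation of an admissible portfolio. Here `∫_0^t γ dS` is given by integration by
parts as `γ(t)S(t) − ys − ∫_{[0,t]} S dγ`. -/
theorem portfolio_variation_bounds (T s z δ μ y : ℝ) (hT : 0 ≤ T) (hδ : 0 < δ)
    (hμ : 0 < μ) (hμ1 : μ < 1) (hz : 0 ≤ z)
    (S : ℝ → ℝ) (hScont : Continuous S) (hSpos : ∀ t, 0 < S t) (hs : S 0 = s)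
    (γp γm : StieltjesFunction ℝ) (hγp0 : γp 0 = 0) (hγm0 : γm 0 = 0)
    (γ : ℝ → ℝ) (hγ : ∀ t, γ t = y + γp t - γm t)
    (hadm1 : ∀ t ∈ Set.Icc (0:ℝ) T,
      0 ≤ z + tcost δ μ y s + |y| * s
        - (1 + μ) * (stieltjesInt S γp t - stieltjesInt S γm t)
        - 2 * μ * stieltjesInt S γm t + (1 + μ) * (γ t * S t))
    (hadm2 : ∀ t ∈ Set.Icc (0:ℝ) T,
      0 ≤ z + tcost δ μ y s + |y| * s
        - (1 - μ) * (stieltjesInt S γp t - stieltjesInt S γm t)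
        - 2 * μ * stieltjesInt S γp t + (1 - μ) * (γ t * S t)) :
    ∀ t ∈ Set.Icc (0:ℝ) T,
      stieltjesInt S γm t ≤ (1 / (2 * μ)) * (z + tcost δ μ y s + |y| * s
        + (1 + μ) * (|y| * s
          + (γ t * S t - y * s - (stieltjesInt S γp t - stieltjesInt S γm t)))) ∧
      stieltjesInt S γp t ≤ (1 / (2 * μ)) * (z + tcost δ μ y s + |y| * s
        + (1 - μ) * (|y| * s
          + (γ t * S t - y * s - (stieltjesInt S γp t - stieltjesInt S γm t)))) :=
  portfolio_variation_bounds_general T s z δ μ y hμ hμ1 S hSpos hs γp γm γ hadm1 hadm2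
end
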